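/- Fix n with 2 ≤ n ≤ p and let 𝔔 ⊆ 𝔓 be a subset satisfying property S(n−1) and property U(n−1). Then: (1) H_n ∉ 𝔔; (2) no P ∈ 𝔔 separates the chambers x_nC and x_n s_{i_n}C; (3) every P ∈ 𝔔 separates the chambers x₁C and x_nC. -/

import Mathlib

noncomputable section

namespace PaperBound

variable {B : Type} {W : Type} [Group W]

/-- The value `B(α_i, α_j)` of the canonical symmetric bilinear form on simple roots:
`-cos (π / m i j)` if `m i j ≠ ∞` (encoded as `M i j ≠ 0`) and `-1` otherwise. -/
def cB (M : CoxeterMatrix B) (i j : B) : ℝ :=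
  if M i j = 0 then -1 else - Real.cos (Real.pi / (M i j : ℝ))

/-- The canonical symmetric bilinear form on `V = B → ℝ` (coordinates in the basis of
simple roots `Δ = {α_i}`). -/
def bform [Fintype B] (M : CoxeterMatrix B) (u v : B → ℝ) : ℝ :=
  ∑ i, ∑ j, u i * v j * cB M i j

/-- The natural pairing `⟨-,-⟩ : V* × V → ℝ`, where both `V` and `V*` are modelled as
`B → ℝ` (coordinates of `V*` taken in the dual basis of `Δ`). -/
def pair [Fintype B] (f v : B → ℝ) : ℝ := ∑ i, f i * v i

/-- The simple root `α_i ∈ V`. -/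
def sroot [DecidableEq B] (i : B) : B → ℝ := Pi.single i 1

/-- `ρ` is the geometric representation of `W` on `V = B → ℝ`:
`s_i · v = v - 2 B(α_i, v) α_i`. -/
def IsGeomRep [Fintype B] [DecidableEq B] (M : CoxeterMatrix B) (cs : CoxeterSystem M W)
    (ρ : W →* (B → ℝ) ≃ₗ[ℝ] (B → ℝ)) : Prop :=
  ∀ (i : B) (v : B → ℝ), ρ (cs.simple i) v = v - (2 * bform M (sroot i) v) • sroot i

/-- `π` is the contragredient representation of `W` on `V* = B → ℝ`:
`⟨w·f, w·v⟩ = ⟨f, v⟩`. -/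
def IsContraRep [Fintype B] (ρ : W →* (B → ℝ) ≃ₗ[ℝ] (B → ℝ))
    (π : W →* (B → ℝ) ≃ₗ[ℝ] (B → ℝ)) : Prop :=
  ∀ (w : W) (f v : B → ℝ), pair (π w f) (ρ w v) = pair f v

/-- The set `Φ⁺` of positive roots: roots (elements of the orbit of the simple roots)
all of whose coordinates in the basis `Δ` are nonnegative. -/
def PhiPos [Fintype B] [DecidableEq B] (ρ : W →* (B → ℝ) ≃ₗ[ℝ] (B → ℝ)) : Set (B → ℝ) :=
  {α | (∃ (w : W) (i : B), α = ρ w (sroot i)) ∧ ∀ j, 0 ≤ α j}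

/-- The hyperplane `H_α = {f ∈ V* : ⟨f, α⟩ = 0}`. -/
def hyp [Fintype B] (α : B → ℝ) : Set (B → ℝ) := {f | pair f α = 0}

/-- The set `𝔓 = {H_α : α ∈ Φ⁺}` of hyperplanes. -/
def Planes [Fintype B] [DecidableEq B] (ρ : W →* (B → ℝ) ≃ₗ[ℝ] (B → ℝ)) :
    Set (Set (B → ℝ)) :=
  {H | ∃ α ∈ PhiPos (W := W) ρ, H = hyp α}

/-- The (open) dominant chamber `C = {f ∈ V* : ⟨f, α_i⟩ > 0 for all i}`. -/
def domCham (B : Type) [Fintype B] [DecidableEq B] : Set (B → ℝ) :=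
  {f | ∀ i : B, 0 < pair f (sroot i)}

/-- The Tits cone `U = ⋃_{w ∈ W} w · (closure of C)`. -/
def titsCone [Fintype B] [DecidableEq B] (π : W →* (B → ℝ) ≃ₗ[ℝ] (B → ℝ)) :
    Set (B → ℝ) :=
  ⋃ w : W, (π w) '' closure (domCham B)

/-- `A ⩀ B := A ∩ B ∩ U°`, where `U°` is the interior of the Tits cone. -/
def dcap [Fintype B] [DecidableEq B] (π : W →* (B → ℝ) ≃ₗ[ℝ] (B → ℝ))
    (A A' : Set (B → ℝ)) : Set (B → ℝ) :=
  A ∩ A' ∩ interior (titsCone π)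

/-- A set `𝔔` of hyperplanes is intersecting if `H₁ ⩀ H₂ ≠ ∅` for all `H₁, H₂ ∈ 𝔔`. -/
def Intersecting [Fintype B] [DecidableEq B] (π : W →* (B → ℝ) ≃ₗ[ℝ] (B → ℝ))
    (Q : Set (Set (B → ℝ))) : Prop :=
  ∀ H₁ ∈ Q, ∀ H₂ ∈ Q, (dcap π H₁ H₂).Nonempty

/-- The chamber `wC ⊆ V*`. -/
def cham [Fintype B] [DecidableEq B] (π : W →* (B → ℝ) ≃ₗ[ℝ] (B → ℝ)) (w : W) :
    Set (B → ℝ) :=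
  (π w) '' domCham B

/-- The hyperplane with root `α` separates `f, g ∈ V*`: `⟨f, α⟩⟨g, α⟩ < 0`. -/
def SepPt [Fintype B] (α f g : B → ℝ) : Prop := pair f α * pair g α < 0

/-- The hyperplane with root `α` separates the subsets `A, A'` of `V*`: every point of
`A ∪ A'` lies off the hyperplane, and every point of `A` is separated from every point
of `A'`. -/
def SepSets [Fintype B] (α : B → ℝ) (A A' : Set (B → ℝ)) : Prop :=
  (∀ f ∈ A ∪ A', pair f α ≠ 0) ∧ ∀ f ∈ A, ∀ g ∈ A', SepPt α f g

/-- The subset `A ⊆ V*` lies entirely on one side of the hyperplane with root `α`. -/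
def OneSide [Fintype B] (α : B → ℝ) (A : Set (B → ℝ)) : Prop :=
  (∀ f ∈ A, pair f α ≠ 0) ∧ ∀ f ∈ A, ∀ g ∈ A, ¬ SepPt α f g

/-- The hyperplane `H ∈ 𝔓` separates the subsets `A, A'` of `V*` (expressed via a
positive root `α` with `H = H_α`; this does not depend on the choice of `α`). -/
def SepSetsH [Fintype B] [DecidableEq B] (ρ : W →* (B → ℝ) ≃ₗ[ℝ] (B → ℝ))
    (H : Set (B → ℝ)) (A A' : Set (B → ℝ)) : Prop :=
  ∃ α ∈ PhiPos (W := W) ρ, H = hyp α ∧ SepSets α A A'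


/-- The open half-space bounded by the hyperplane with root `α` on the side not containing
the chamber `wC`. -/
def halfNeg [Fintype B] [DecidableEq B] (π : W →* (B → ℝ) ≃ₗ[ℝ] (B → ℝ)) (w : W)
    (α : B → ℝ) : Set (B → ℝ) :=
  {f | ∀ f₀ ∈ cham π w, pair f α * pair f₀ α < 0}

/-- Auxiliary recursion producing the sets `𝔄_i` (first component) together with the
cumulative unions `𝔄₀ ∪ ⋯ ∪ 𝔄_i` (second component), starting from `𝔄₀ = A0`:
`𝔄_{i+1} = {P ∈ Q ∖ (𝔄₀ ∪ ⋯ ∪ 𝔄_i) : P ⩀ σ(R) = ∅ for some R ∈ 𝔄_i}`. -/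
def AseqAux [Fintype B] [DecidableEq B] (π : W →* (B → ℝ) ≃ₗ[ℝ] (B → ℝ))
    (Q : Set (Set (B → ℝ))) (σ : W) (A0 : Set (Set (B → ℝ))) :
    ℕ → Set (Set (B → ℝ)) × Set (Set (B → ℝ))
  | 0 => (A0, A0)
  | i + 1 =>
    let prev := AseqAux π Q σ A0 i
    ({P | P ∈ Q ∧ P ∉ prev.2 ∧ ∃ R ∈ prev.1, dcap π P ((π σ) '' R) = ∅},
      prev.2 ∪ {P | P ∈ Q ∧ P ∉ prev.2 ∧ ∃ R ∈ prev.1, dcap π P ((π σ) '' R) = ∅})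

/-- The set `𝔄_i`. -/
def Aseq [Fintype B] [DecidableEq B] (π : W →* (B → ℝ) ≃ₗ[ℝ] (B → ℝ))
    (Q : Set (Set (B → ℝ))) (σ : W) (A0 : Set (Set (B → ℝ))) (i : ℕ) :
    Set (Set (B → ℝ)) :=
  (AseqAux π Q σ A0 i).1

section Words

variable {M : CoxeterMatrix B}

/-- The element `x′_n = x s₁ ⋯ ŝ_{i₁} ⋯ ŝ_{i_{n−1}} ⋯ s_{i_n − 1}`: the product of `x` and
the first `i_n - 1` letters of the word `ω`, with the letters at positions `i₁, …, i_{n−1}`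
omitted. (Positions are recorded `0`-based: the index `ι n : Fin ω.length` corresponds to
the letter `s_{i_{n+1}}` of the paper.) -/
def omitProd (cs : CoxeterSystem M W) (x : W) (ω : List B) {p : ℕ}
    (ι : Fin p → Fin ω.length) (n : Fin p) : W :=
  x * cs.wordProd (((List.finRange ω.length).filter
      (fun j : Fin ω.length => decide ((j : ℕ) < (ι n : ℕ) ∧ ∀ m : Fin p, m < n → j ≠ ι m))).map ω.get)

/-- The condition `ℓ(x′_n s_{i_n}) < ℓ(x′_n)` for all `n = 1, …, p`. -/
def DescCond (cs : CoxeterSystem M W) (x : W) (ω : List B) {p : ℕ}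
    (ι : Fin p → Fin ω.length) : Prop :=
  ∀ n : Fin p, cs.length (omitProd cs x ω ι n * cs.simple (ω.get (ι n))) <
    cs.length (omitProd cs x ω ι n)

/-- The element `x_n := x s₁ ⋯ s_{i_n − 1}`. -/
def xseq (cs : CoxeterSystem M W) (x : W) (ω : List B) {p : ℕ}
    (ι : Fin p → Fin ω.length) (n : Fin p) : W :=
  x * cs.wordProd (ω.take (ι n))

/-- The reflection `σ_n := x_n s_{i_n} x_n⁻¹`. -/
def sigmaseq (cs : CoxeterSystem M W) (x : W) (ω : List B) {p : ℕ}
    (ι : Fin p → Fin ω.length) (n : Fin p) : W :=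
  xseq cs x ω ι n * cs.simple (ω.get (ι n)) * (xseq cs x ω ι n)⁻¹

/-- The element `e_n := σ_n σ_{n−1} ⋯ σ₁`, with `e₀ = e`. -/
def eseq (cs : CoxeterSystem M W) (x : W) (ω : List B) {p : ℕ}
    (ι : Fin p → Fin ω.length) : ℕ → W
  | 0 => 1
  | n + 1 => (if h : n < p then sigmaseq cs x ω ι ⟨n, h⟩ else 1) * eseq cs x ω ι n

/-- A root of the hyperplane `H_n` corresponding to the reflection `σ_n`, namely
`x_n · α_{s_{i_n}}`. -/
def rootseq [Fintype B] [DecidableEq B] (cs : CoxeterSystem M W)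
    (ρ : W →* (B → ℝ) ≃ₗ[ℝ] (B → ℝ)) (x : W) (ω : List B) {p : ℕ}
    (ι : Fin p → Fin ω.length) (n : Fin p) : B → ℝ :=
  ρ (xseq cs x ω ι n) (sroot (ω.get (ι n)))

/-- The hyperplane `H_n ∈ 𝔓` corresponding to the reflection `σ_n`. -/
def Hseq [Fintype B] [DecidableEq B] (cs : CoxeterSystem M W)
    (ρ : W →* (B → ℝ) ≃ₗ[ℝ] (B → ℝ)) (x : W) (ω : List B) {p : ℕ}
    (ι : Fin p → Fin ω.length) (n : Fin p) : Set (B → ℝ) :=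
  hyp (rootseq cs ρ x ω ι n)

end Words


/-!
Everything reduces to signs of roots on chambers. Every root is nonnegative or nonpositive (the
positivity theorem for the geometric representation, proved by the usual dihedral reduction), so
for a root `α` the wall `H_α` separates `uC` from `vC` exactly when `u⁻¹α` and `v⁻¹α` have
opposite signs. Along the gallery of prefix chambers `x s₁⋯s_t C` of the reduced word `ω`,
the only wall crossed at step `t` is that of `β_t = x s₁⋯s_{t-1} α_{s_t}`, and `β_t` is
positive on all earlier prefix chambers. Hence a wall `P ∈ 𝔔`, which separates `x₁C` from
`x_{n-1}s_{i_{n-1}}C`, is none of the `H_{β_t}` with `t > i_{n-1}`. For `t = i_n` this is (1),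
and (2) follows because `H_n` is the only wall between `x_nC` and `x_n s_{i_n}C`. Neither is `P`
crossed between `x_{n-1}s_{i_{n-1}}C` and `x_nC`, which gives (3).
-/

open CoxeterSystem Polynomial.Chebyshev

theorem Nat.exists_flip_between {P : ℕ → Prop} {a b : ℕ} (hab : a ≤ b) (h : P a ↔ ¬ P b) :
    ∃ t, a ≤ t ∧ t < b ∧ (P t ↔ ¬ P (t + 1)) := by
  induction b, hab using Nat.le_induction with
  | base => exact (iff_not_self h).elim
  | succ b hab ih =>
    by_cases hb : P a ↔ ¬ P b
    · obtain ⟨t, hat, htb, ht⟩ := ih hb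
      exact ⟨t, hat, htb.trans (Nat.lt_succ_self b), ht⟩
    · exact ⟨b, hab, Nat.lt_succ_self b, by tauto⟩

theorem mul_neg_iff_of_ne_zero {a b : ℝ} (ha : a ≠ 0) (hb : b ≠ 0) :
    a * b < 0 ↔ (0 < a ↔ ¬ 0 < b) := by
  rcases ha.lt_or_gt with ha | ha <;> rcases hb.lt_or_gt with hb | hb <;>
    simp [mul_neg_iff, ha, hb, ha.not_gt, hb.not_gt]

theorem nonneg_smul_iff {v : B → ℝ} (hv : 0 ≤ v) (hv0 : v ≠ 0) {c : ℝ} (hc : c ≠ 0) :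
    0 ≤ c • v ↔ 0 < c := by
  refine ⟨fun h => ?_, fun h => smul_nonneg h.le hv⟩
  obtain ⟨i, hi⟩ := Function.ne_iff.mp hv0
  have hci : 0 ≤ c * v i := h i
  exact lt_of_le_of_ne (nonneg_of_mul_nonneg_left hci (lt_of_le_of_ne (hv i) hi.symm)) hc.symm

section Pairing

variable [Fintype B]

theorem pair_eq_dotProduct (f v : B → ℝ) : pair f v = f ⬝ᵥ v := rfl

theorem hyp_smul {β : B → ℝ} {c : ℝ} (hc : c ≠ 0) : hyp (c • β) = hyp β := by
  ext f
  simp [hyp, pair_eq_dotProduct, dotProduct_smul, hc]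

theorem exists_smul_of_hyp_eq {α β : B → ℝ} (hβ : β ≠ 0) (h : hyp α = hyp β) :
    ∃ c : ℝ, α = c • β := by
  -- the component of `α` orthogonal to `β` lies on `hyp β = hyp α`, so is orthogonal to itself
  set c := α ⬝ᵥ β / β ⬝ᵥ β
  have hββ : β ⬝ᵥ β ≠ 0 := by simpa using hβ
  have hgβ : (α - c • β) ⬝ᵥ β = 0 := by
    rw [sub_dotProduct, smul_dotProduct, smul_eq_mul, div_mul_cancel₀ _ hββ, sub_self]
  have hgα : (α - c • β) ⬝ᵥ α = 0 := (h ▸ hgβ : α - c • β ∈ hyp α)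
  have hgg : (α - c • β) ⬝ᵥ (α - c • β) = 0 := by
    rw [dotProduct_sub, dotProduct_smul, hgα, hgβ, smul_zero, sub_zero]
  exact ⟨c, sub_eq_zero.mp (dotProduct_self_eq_zero.mp hgg)⟩

variable [DecidableEq B]

theorem pair_sroot (f : B → ℝ) (i : B) : pair f (sroot i) = f i := by
  simp [pair_eq_dotProduct, sroot, dotProduct_single]

theorem one_mem_domCham : (1 : B → ℝ) ∈ domCham B := fun i => by
  simp [pair_sroot]

theorem pair_pos_of_mem_domCham {f v : B → ℝ} (hf : f ∈ domCham B) (hv : 0 ≤ v) (hv0 : v ≠ 0) :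
    0 < pair f v := by
  obtain ⟨i, hi⟩ := Function.ne_iff.mp hv0
  have hf' : ∀ j, 0 < f j := fun j => pair_sroot f j ▸ hf j
  exact Finset.sum_pos' (fun j _ => mul_nonneg (hf' j).le (hv j))
    ⟨i, Finset.mem_univ _, mul_pos (hf' i) (lt_of_le_of_ne (hv i) hi.symm)⟩

end Pairing

section CoxeterMatrix

variable {M : CoxeterMatrix B}

theorem cB_self (i : B) : cB M i i = 1 := by
  simp [cB]

theorem cB_comm (i j : B) : cB M i j = cB M j i := by
  rw [cB, cB, M.symmetric]

theorem chebyshevU_eval_neg_cB_nonneg {i j : B} (hij : i ≠ j) {k : ℤ} (hk : -1 ≤ k)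
    (hkM : M i j = 0 ∨ k < M i j) : 0 ≤ (U ℝ k).eval (-cB M i j) := by
  have hk' : (-1 : ℝ) ≤ k := by exact_mod_cast hk
  by_cases h0 : M i j = 0
  · simp only [cB, h0, if_true, neg_neg, U_eval_one]
    linarith
  have hm : (2 : ℝ) ≤ M i j := by
    have := M.off_diagonal i j hij
    exact_mod_cast (by omega : 2 ≤ M i j)
  have hkM : (k : ℝ) + 1 ≤ M i j := by
    have := hkM.resolve_left h0
    exact_mod_cast (by omega : k + 1 ≤ (M i j : ℤ))
  set θ := Real.pi / M i j
  have hθ : 0 < θ := by positivity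
  have hsinθ : 0 < Real.sin θ := Real.sin_pos_of_pos_of_lt_pi hθ <| by
    rw [div_lt_iff₀ (by linarith)]
    nlinarith [Real.pi_pos]
  have hsin : 0 ≤ Real.sin ((k + 1) * θ) :=
    Real.sin_nonneg_of_nonneg_of_le_pi (mul_nonneg (by linarith) hθ.le) <| by
      calc ((k : ℝ) + 1) * θ ≤ M i j * θ := by gcongr
        _ = Real.pi := by simp only [θ]; field_simp
  simp only [cB, h0, if_false, neg_neg]
  rw [← U_real_cos] at hsin
  exact nonneg_of_mul_nonneg_left hsin hsinθ

end CoxeterMatrix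

section Words

variable {M : CoxeterMatrix B} {cs : CoxeterSystem M W}

theorem isReduced_of_length_mul_wordProd {u : W} {l : List B}
    (h : cs.length u + l.length ≤ cs.length (u * cs.wordProd l)) : cs.IsReduced l :=
  le_antisymm (cs.length_wordProd_le l) <| by
    have := cs.length_mul_le u (cs.wordProd l)
    omega

theorem not_isRightDescent_of_length_mul_wordProd_cons {u : W} {a : B} {l : List B}
    (h : cs.length u + (l.length + 1) ≤ cs.length (u * cs.wordProd (a :: l))) :
    ¬ cs.IsRightDescent u a := by
  intro ha
  have := cs.length_mul_le (u * cs.simple a) (cs.wordProd l)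
  have := cs.length_wordProd_le l
  rw [wordProd_cons, ← mul_assoc] at h
  unfold IsRightDescent at ha
  omega

/-- `u` is what is left after splitting off the longest possible alternating word. -/
theorem exists_mul_alternatingWord {w : W} {i j : B} (hj : cs.IsRightDescent w j)
    (hi : ¬ cs.IsRightDescent w i) :
    ∃ (u : W) (r : ℕ), w = u * cs.wordProd (alternatingWord i j r) ∧
      cs.length u + r = cs.length w ∧ 0 < r ∧ (M i j = 0 ∨ r < M i j) ∧
      ¬ cs.IsRightDescent u i ∧ ¬ cs.IsRightDescent u j := by
  classical
  let P : ℕ → Prop := fun r =>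
    ∃ u, w = u * cs.wordProd (alternatingWord i j r) ∧ cs.length u + r = cs.length w
  have hP1 : P 1 := ⟨w * cs.simple j, by simp [alternatingWord], cs.isRightDescent_iff.mp hj⟩
  have hPle : ∀ r, P r → r ≤ cs.length w := fun r ⟨u, _, hu⟩ => by omega
  set r := Nat.findGreatest P (cs.length w)
  obtain ⟨u, hw, hlen⟩ : P r := Nat.findGreatest_spec (hPle 1 hP1) hP1
  have hr : 0 < r := Nat.le_findGreatest (hPle 1 hP1) hP1
  have hmax : ¬ P (r + 1) := fun h =>
    Nat.findGreatest_is_greatest (Nat.lt_succ_self r) (hPle _ h) h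
  have hnext : ¬ cs.IsRightDescent u (if Even r then j else i) := by
    intro hd
    refine hmax ⟨u * cs.simple (if Even r then j else i), ?_, ?_⟩
    · rw [alternatingWord_succ', wordProd_cons, hw, mul_assoc, simple_mul_simple_cancel_left]
    · have := cs.isRightDescent_iff.mp hd
      omega
  clear_value r
  obtain ⟨q, rfl⟩ : ∃ q, r = q + 1 := Nat.exists_eq_add_one.mpr hr
  have hprev : ¬ cs.IsRightDescent u (if Even q then j else i) := by
    apply not_isRightDescent_of_length_mul_wordProd_cons (l := alternatingWord i j q)
    rw [← alternatingWord_succ', ← hw, length_alternatingWord]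
    omega
  have hrM : M i j = 0 ∨ q + 1 < M i j := by
    have hred : cs.IsReduced (alternatingWord j i (q + 2)) := by
      apply isReduced_of_length_mul_wordProd (u := u)
      rw [alternatingWord_succ, wordProd_concat, ← mul_assoc, ← hw, List.length_concat,
        length_alternatingWord, (cs.not_isRightDescent_iff.mp hi)]
      omega
    by_contra! h
    exact cs.not_isReduced_alternatingWord j i (M.symmetric i j ▸ h.1) (by
      rw [M.symmetric]; omega) hred
  refine ⟨u, q + 1, hw, hlen, hr, hrM, ?_⟩
  rcases Nat.even_or_odd q with hq | hq
  · simp only [hq, if_true, Nat.not_even_iff_odd.mpr hq.add_one, if_false] at hnext hprev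
    exact ⟨hnext, hprev⟩
  · simp only [Nat.not_even_iff_odd.mpr hq, if_false, hq.add_one, if_true] at hnext hprev
    exact ⟨hprev, hnext⟩

variable (cs)

theorem wordProd_take_succ {ω : List B} {t : ℕ} (ht : t < ω.length) :
    cs.wordProd (ω.take (t + 1)) = cs.wordProd (ω.take t) * cs.simple ω[t] := by
  rw [← List.take_concat_get' ω t ht, wordProd_append, wordProd_singleton]

theorem wordProd_take_eq_mul_wordProd_drop (ω : List B) {a t : ℕ} (hat : a ≤ t) :
    cs.wordProd (ω.take t) = cs.wordProd (ω.take a) * cs.wordProd ((ω.take t).drop a) := by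
  conv_lhs => rw [← List.take_append_drop a (ω.take t)]
  rw [wordProd_append, List.take_take, min_eq_left hat]

theorem xseq_mul_simple (x : W) (ω : List B) {p : ℕ} (ι : Fin p → Fin ω.length) (n : Fin p) :
    xseq cs x ω ι n * cs.simple (ω.get (ι n)) = x * cs.wordProd (ω.take (ι n + 1)) := by
  rw [xseq, mul_assoc, wordProd_take_succ cs (ι n).isLt]
  rfl

end Words

def roots [Fintype B] [DecidableEq B] (ρ : W →* (B → ℝ) ≃ₗ[ℝ] (B → ℝ)) : Set (B → ℝ) :=
  {α | ∃ (w : W) (i : B), α = ρ w (sroot i)}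

section GeometricRepresentation

variable [Fintype B] [DecidableEq B] {M : CoxeterMatrix B} {cs : CoxeterSystem M W}
  {ρ π : W →* (B → ℝ) ≃ₗ[ℝ] (B → ℝ)}

theorem bform_sroot_sroot (i j : B) : bform M (sroot i) (sroot j) = cB M i j := by
  simp [bform, sroot, Pi.single_apply]

theorem rho_mem_roots (w : W) {α : B → ℝ} (hα : α ∈ roots ρ) : ρ w α ∈ roots ρ := by
  obtain ⟨u, i, rfl⟩ := hα
  exact ⟨w * u, i, by rw [map_mul, LinearEquiv.mul_apply]⟩

theorem ne_zero_of_mem_roots {α : B → ℝ} (hα : α ∈ roots ρ) : α ≠ 0 := by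
  obtain ⟨w, i, rfl⟩ := hα
  simp [sroot]

omit [DecidableEq B] in
theorem IsContraRep.pair_apply (hπ : IsContraRep ρ π) (w : W) (f v : B → ℝ) :
    pair (π w f) v = pair f (ρ w⁻¹ v) := by
  rw [← hπ w f (ρ w⁻¹ v), ← LinearEquiv.mul_apply, ← map_mul, mul_inv_cancel, map_one]
  rfl

namespace IsGeomRep

variable (hρ : IsGeomRep M cs ρ)
include hρ

theorem rho_simple_sroot (i j : B) :
    ρ (cs.simple i) (sroot j) = sroot j - (2 * cB M i j) • sroot i := by
  rw [hρ, bform_sroot_sroot]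

theorem rho_simple_sroot_self (i : B) : ρ (cs.simple i) (sroot i) = -sroot i := by
  rw [hρ.rho_simple_sroot, cB_self]
  module

theorem rho_simple_apply_of_ne {i j : B} (hji : j ≠ i) (v : B → ℝ) :
    ρ (cs.simple i) v j = v j := by
  simp [hρ i v, sroot, hji]

/-- `-cB M i j = cos (π / m_ij)`, and Chebyshev's recursion `U_{r+1} = 2 c U_r - U_{r-1}` is
exactly the effect of one more simple reflection. -/
theorem rho_alternatingWord_sroot (i j : B) (r : ℕ) :
    ρ (cs.wordProd (alternatingWord i j r)) (sroot i) =
      (if Even r then (U ℝ r).eval (-cB M i j) else (U ℝ (r - 1)).eval (-cB M i j)) • sroot i +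
      (if Even r then (U ℝ (r - 1)).eval (-cB M i j) else (U ℝ r).eval (-cB M i j)) •
        sroot j := by
  induction r with
  | zero => simp [alternatingWord]
  | succ r ih =>
    rw [alternatingWord_succ', wordProd_cons, map_mul, LinearEquiv.mul_apply, ih]
    have hU : (U ℝ (r + 1 : ℕ)).eval (-cB M i j) =
        2 * (-cB M i j) * (U ℝ r).eval (-cB M i j) - (U ℝ (r - 1)).eval (-cB M i j) := by
      simp [U_add_one]
    rcases Nat.even_or_odd r with hr | hr
    · simp only [hr, if_true, Nat.not_even_iff_odd.mpr hr.add_one, if_false, map_add, map_smul,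
        hρ.rho_simple_sroot, hU, cB_comm j i, cB_self]
      push_cast [add_sub_cancel_right]
      module
    · simp only [Nat.not_even_iff_odd.mpr hr, if_false, hr.add_one, if_true, map_add, map_smul,
        hρ.rho_simple_sroot, hU, cB_self]
      push_cast [add_sub_cancel_right]
      module

/-- Split `w = u · (alternating word in s_i, s_j)` as in `exists_mul_alternatingWord`: induction
handles `u`, and the dihedral part contributes nonnegative Chebyshev coefficients. -/
theorem nonneg_rho_sroot_of_not_isRightDescent {w : W} {i : B}
    (hi : ¬ cs.IsRightDescent w i) : 0 ≤ ρ w (sroot i) := by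
  induction h : cs.length w using Nat.strong_induction_on generalizing w i with
  | _ N ih =>
  obtain rfl | hw := eq_or_ne w 1
  · simp [sroot]
  obtain ⟨j, hj⟩ := cs.exists_rightDescent_of_ne_one hw
  have hij : i ≠ j := by rintro rfl; exact hi hj
  obtain ⟨u, r, rfl, hlen, hr, hrM, hui, huj⟩ := exists_mul_alternatingWord hj hi
  have hαi := ih _ (by omega) hui rfl
  have hαj := ih _ (by omega) huj rfl
  have hUr := chebyshevU_eval_neg_cB_nonneg (M := M) hij (k := r) (by omega) (by omega)
  have hUr' := chebyshevU_eval_neg_cB_nonneg (M := M) hij (k := r - 1) (by omega) (by omega)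
  rw [map_mul, LinearEquiv.mul_apply, hρ.rho_alternatingWord_sroot, map_add, map_smul, map_smul]
  split_ifs <;> exact add_nonneg (smul_nonneg ‹_› hαi) (smul_nonneg ‹_› hαj)

theorem nonneg_or_nonpos {α : B → ℝ} (hα : α ∈ roots ρ) : 0 ≤ α ∨ α ≤ 0 := by
  obtain ⟨w, i, rfl⟩ := hα
  by_cases hi : cs.IsRightDescent w i
  · right
    have := hρ.nonneg_rho_sroot_of_not_isRightDescent
      (cs.isRightDescent_iff_not_isRightDescent_mul.mp hi)
    rw [map_mul, LinearEquiv.mul_apply, hρ.rho_simple_sroot_self, map_neg] at this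
    exact neg_nonneg.mp this
  · exact Or.inl (hρ.nonneg_rho_sroot_of_not_isRightDescent hi)

theorem exists_eq_smul_sroot {α : B → ℝ} (hα : α ∈ roots ρ) {i : B}
    (h : 0 ≤ α ↔ ¬ 0 ≤ ρ (cs.simple i) α) : ∃ c : ℝ, c ≠ 0 ∧ α = c • sroot i := by
  wlog hα0 : 0 ≤ α generalizing α
  · have hsα : ρ (cs.simple i) (ρ (cs.simple i) α) = α := by
      rw [← LinearEquiv.mul_apply, ← map_mul, simple_mul_simple_self, map_one]
      rfl
    obtain ⟨c, hc, hcα⟩ := this (rho_mem_roots _ hα) (by rw [hsα]; tauto) (by tauto)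
    refine ⟨-c, neg_ne_zero.mpr hc, ?_⟩
    rw [← hsα, hcα, map_smul, hρ.rho_simple_sroot_self, smul_neg, neg_smul]
  have hsα : ρ (cs.simple i) α ≤ 0 :=
    (hρ.nonneg_or_nonpos (rho_mem_roots _ hα)).resolve_left (h.mp hα0)
  have hαj : ∀ j ≠ i, α j = 0 := fun j hj =>
    le_antisymm (hρ.rho_simple_apply_of_ne hj α ▸ hsα j) (hα0 j)
  have hαi : α = α i • sroot i := by
    ext j
    by_cases hj : j = i
    · simp [hj, sroot]
    · simp [hαj j hj, sroot, hj]
  refine ⟨α i, fun h0 => ne_zero_of_mem_roots hα ?_, hαi⟩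
  rw [hαi, h0, zero_smul]

theorem nonneg_rho_wordProd_sroot {l : List B} {i : B} (hl : cs.IsReduced (l ++ [i])) :
    0 ≤ ρ (cs.wordProd l) (sroot i) := by
  apply hρ.nonneg_rho_sroot_of_not_isRightDescent
  rw [CoxeterSystem.IsReduced, wordProd_append, wordProd_singleton, List.length_append,
    List.length_singleton] at hl
  have := cs.length_wordProd_le l
  unfold IsRightDescent
  omega

/-- Along a reduced word, the wall crossed at step `t` has all earlier prefix chambers on its
positive side. -/
theorem nonneg_rho_inv_smul_iff {ω : List B} (hω : cs.IsReduced ω) (u : W) {a t : ℕ}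
    (hat : a ≤ t) (ht : t < ω.length) {c : ℝ} (hc : c ≠ 0) :
    0 ≤ ρ (u * cs.wordProd (ω.take a))⁻¹ (c • ρ (u * cs.wordProd (ω.take t)) (sroot ω[t])) ↔
      0 < c := by
  have hseg : cs.IsReduced ((ω.take t).drop a ++ [ω[t]]) := by
    rw [← List.drop_append_of_le_length (by simp; omega), List.take_concat_get']
    exact (hω.take (t + 1)).drop a
  rw [map_smul, ← LinearEquiv.mul_apply, ← map_mul, wordProd_take_eq_mul_wordProd_drop cs ω hat,
    ← mul_assoc u, inv_mul_cancel_left]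
  exact nonneg_smul_iff (hρ.nonneg_rho_wordProd_sroot hseg) (ne_zero_of_mem_roots ⟨_, _, rfl⟩) hc

variable (hπ : IsContraRep ρ π)
include hπ

theorem pair_mem_cham_sign {α f : B → ℝ} (hα : α ∈ roots ρ) {u : W} (hf : f ∈ cham π u) :
    pair f α ≠ 0 ∧ (0 < pair f α ↔ 0 ≤ ρ u⁻¹ α) := by
  obtain ⟨f, hf, rfl⟩ := hf
  rw [hπ.pair_apply]
  have hδ := rho_mem_roots u⁻¹ hα
  have hδ0 := ne_zero_of_mem_roots hδ
  rcases hρ.nonneg_or_nonpos hδ with h | h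
  · have := pair_pos_of_mem_domCham hf h hδ0
    exact ⟨this.ne', iff_of_true this h⟩
  · have := pair_pos_of_mem_domCham hf (neg_nonneg.mpr h) (neg_ne_zero.mpr hδ0)
    rw [pair_eq_dotProduct, dotProduct_neg, neg_pos] at this
    exact ⟨this.ne, iff_of_false this.not_gt fun h' => hδ0 (le_antisymm h h')⟩

theorem sepSets_cham_iff {α : B → ℝ} (hα : α ∈ roots ρ) {u v : W} :
    SepSets α (cham π u) (cham π v) ↔ (0 ≤ ρ u⁻¹ α ↔ ¬ 0 ≤ ρ v⁻¹ α) := by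
  have hsign := fun {w : W} {f : B → ℝ} (hf : f ∈ cham π w) => hρ.pair_mem_cham_sign hπ hα hf
  have hsep : ∀ f ∈ cham π u, ∀ g ∈ cham π v,
      (SepPt α f g ↔ (0 ≤ ρ u⁻¹ α ↔ ¬ 0 ≤ ρ v⁻¹ α)) := fun f hf g hg => by
    rw [SepPt, mul_neg_iff_of_ne_zero (hsign hf).1 (hsign hg).1, (hsign hf).2, (hsign hg).2]
  have h1u : π u 1 ∈ cham π u := Set.mem_image_of_mem _ one_mem_domCham
  have h1v : π v 1 ∈ cham π v := Set.mem_image_of_mem _ one_mem_domCham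
  refine ⟨fun h => (hsep _ h1u _ h1v).mp (h.2 _ h1u _ h1v), fun h => ⟨?_, ?_⟩⟩
  · rintro f (hf | hf)
    exacts [(hsign hf).1, (hsign hf).1]
  · exact fun f hf g hg => (hsep f hf g hg).mpr h

theorem sepSets_cham_of_not_sepSets_cham {α : B → ℝ} (hα : α ∈ roots ρ) {u v w : W}
    (huv : SepSets α (cham π u) (cham π v)) (hvw : ¬ SepSets α (cham π v) (cham π w)) :
    SepSets α (cham π u) (cham π w) := by
  rw [hρ.sepSets_cham_iff hπ hα] at huv hvw ⊢
  tauto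

theorem exists_eq_smul_of_sepSets_cham {α : B → ℝ} (hα : α ∈ roots ρ) (u : W) {ω : List B}
    {a b : ℕ} (hab : a ≤ b) (hb : b ≤ ω.length)
    (hsep : SepSets α (cham π (u * cs.wordProd (ω.take a)))
      (cham π (u * cs.wordProd (ω.take b)))) :
    ∃ t, ∃ ht : t < ω.length, a ≤ t ∧ t < b ∧
      ∃ c : ℝ, c ≠ 0 ∧ α = c • ρ (u * cs.wordProd (ω.take t)) (sroot ω[t]) := by
  rw [hρ.sepSets_cham_iff hπ hα] at hsep
  obtain ⟨t, hat, htb, hflip⟩ := Nat.exists_flip_between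
    (P := fun t => 0 ≤ ρ (u * cs.wordProd (ω.take t))⁻¹ α) hab hsep
  have ht : t < ω.length := by omega
  rw [wordProd_take_succ cs ht, ← mul_assoc, mul_inv_rev _ (cs.simple _), cs.inv_simple,
    map_mul, LinearEquiv.mul_apply] at hflip
  obtain ⟨c, hc, hδ⟩ := hρ.exists_eq_smul_sroot (rho_mem_roots _ hα) hflip
  refine ⟨t, ht, hat, htb, c, hc, ?_⟩
  rw [← map_smul, ← hδ, ← LinearEquiv.mul_apply, ← map_mul, mul_inv_cancel, map_one]
  rfl

theorem not_sepSets_cham_of_eq_smul {ω : List B} (hω : cs.IsReduced ω) (u : W) {α : B → ℝ}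
    (hα : α ∈ roots ρ) {a b t : ℕ} (ha : a ≤ t) (hb : b ≤ t) (ht : t < ω.length) {c : ℝ}
    (hαc : α = c • ρ (u * cs.wordProd (ω.take t)) (sroot ω[t])) :
    ¬ SepSets α (cham π (u * cs.wordProd (ω.take a))) (cham π (u * cs.wordProd (ω.take b))) := by
  have hc : c ≠ 0 := by
    rintro rfl
    exact ne_zero_of_mem_roots hα (by rw [hαc, zero_smul])
  rw [hρ.sepSets_cham_iff hπ hα, hαc, hρ.nonneg_rho_inv_smul_iff hω u ha ht hc,
    hρ.nonneg_rho_inv_smul_iff hω u hb ht hc]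
  exact iff_not_self

end IsGeomRep

end GeometricRepresentation

/-- for `2 ≤ n ≤ p` and `𝔔 ⊆ 𝔓` satisfying `S(n−1)` and `U(n−1)`:
(1) `H_n ∉ 𝔔`; (2) no `P ∈ 𝔔` separates `x_nC` and `x_n s_{i_n} C`;
(3) every `P ∈ 𝔔` separates `x₁C` and `x_nC`. -/
theorem statement15 [Fintype B] [DecidableEq B] {M : CoxeterMatrix B}
    (cs : CoxeterSystem M W) (ρ π : W →* (B → ℝ) ≃ₗ[ℝ] (B → ℝ))
    (hρ : IsGeomRep M cs ρ) (hπ : IsContraRep ρ π)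
    (x : W) (ω : List B) (hred : cs.IsReduced ω)
    (p : ℕ) (ι : Fin p → Fin ω.length) (hι : StrictMono ι)
    (n : ℕ) (hn2 : 2 ≤ n) (hnp : n ≤ p)
    (Q : Set (Set (B → ℝ)))
    (hS : ∀ P ∈ Q, SepSetsH ρ P (cham π (xseq cs x ω ι ⟨0, by omega⟩))
      (cham π (xseq cs x ω ι ⟨n - 2, by omega⟩ *
        cs.simple (ω.get (ι ⟨n - 2, by omega⟩))))) :
    Hseq cs ρ x ω ι ⟨n - 1, by omega⟩ ∉ Q ∧
    (∀ P ∈ Q, ¬ SepSetsH ρ P (cham π (xseq cs x ω ι ⟨n - 1, by omega⟩))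
      (cham π (xseq cs x ω ι ⟨n - 1, by omega⟩ *
        cs.simple (ω.get (ι ⟨n - 1, by omega⟩))))) ∧
    (∀ P ∈ Q, SepSetsH ρ P (cham π (xseq cs x ω ι ⟨0, by omega⟩))
      (cham π (xseq cs x ω ι ⟨n - 1, by omega⟩))) := by
  have hn1 : n - 1 < p := by omega
  have hι02 : (ι ⟨0, by omega⟩ : ℕ) ≤ ι ⟨n - 2, by omega⟩ :=
    hι.monotone (Fin.mk_le_mk.mpr (Nat.zero_le _))
  have hι21 : (ι ⟨n - 2, by omega⟩ : ℕ) < ι ⟨n - 1, hn1⟩ := hι (Fin.mk_lt_mk.mpr (by omega))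
  simp only [xseq_mul_simple] at hS ⊢
  have hHn : Hseq cs ρ x ω ι ⟨n - 1, hn1⟩ ∉ Q := by
    intro hH
    obtain ⟨α, hα, hHα, hsep⟩ := hS _ hH
    obtain ⟨c, hαc⟩ := exists_smul_of_hyp_eq (ne_zero_of_mem_roots ⟨_, _, rfl⟩) hHα.symm
    exact hρ.not_sepSets_cham_of_eq_smul hπ hred x hα.1 (by omega) hι21 (ι _).isLt hαc hsep
  refine ⟨hHn, fun P hP ⟨α, hα, hPα, hsep⟩ => ?_, fun P hP => ?_⟩
  · obtain ⟨t, ht, hle, hlt, c, hc, rfl⟩ :=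
      hρ.exists_eq_smul_of_sepSets_cham hπ hα.1 x (Nat.le_succ _) (ι _).isLt hsep
    obtain rfl : t = ι ⟨n - 1, hn1⟩ := by omega
    have hHP : Hseq cs ρ x ω ι ⟨n - 1, hn1⟩ = P := by
      rw [hPα, hyp_smul hc]
      rfl
    exact hHn (hHP ▸ hP)
  · obtain ⟨α, hα, hPα, hsep⟩ := hS P hP
    refine ⟨α, hα, hPα, hρ.sepSets_cham_of_not_sepSets_cham hπ hα.1 hsep fun hsep' => ?_⟩
    obtain ⟨t, ht, hle, -, c, -, hαc⟩ :=
      hρ.exists_eq_smul_of_sepSets_cham hπ hα.1 x hι21 (ι _).isLt.le hsep'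
    exact hρ.not_sepSets_cham_of_eq_smul hπ hred x hα.1 (by omega) hle ht hαc hsep

end PaperBound
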